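/- Let V be an m-dimensional vector space over a field K of characteristic zero with a bilinear form f. For any vectors v₁, …, v_{m+1} ∈ V and w₁, …, w_m ∈ V, the alternating sum ∑_{σ ∈ S_{m+1}} sgn(σ) · (∏_{i=1}^{m} f(w_i, v_{σ(i+1)})) • v_{σ(1)} equals 0 in V. -/

import Mathlib

/-- The standard identity of B_m: the alternating sum over S_{m+1} vanishes. -/
theorem alternating_sum_eq_zero {K V : Type*} [Field K] [CharZero K]
    [AddCommGroup V] [Module K V] [FiniteDimensional K V] (m : ℕ)
    (hm : Module.finrank K V = m) (f : V →ₗ[K] V →ₗ[K] K)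
    (v : Fin (m + 1) → V) (w : Fin m → V) :
    ∑ σ : Equiv.Perm (Fin (m + 1)),
      (Equiv.Perm.sign σ : ℤ) •
        ((∏ i : Fin m, f (w i) (v (σ i.succ))) • v (σ 0)) = 0 := by
  classical
  -- the product multilinear map in m variables
  set P : MultilinearMap K (fun _ : Fin m => V) K :=
    (MultilinearMap.mkPiAlgebra K (Fin m) K).compLinearMap (fun i => f (w i)) with hP
  -- linear map z ↦ (x ↦ P x • z)
  set L : V →ₗ[K] MultilinearMap K (fun _ : Fin m => V) V :=
    { toFun := fun z => P.smulRight z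
      map_add' := by
        intro a b; ext x
        simp only [MultilinearMap.smulRight_apply, MultilinearMap.add_apply, smul_add]
      map_smul' := by
        intro c a; ext x
        simp only [MultilinearMap.smulRight_apply, RingHom.id_apply,
          MultilinearMap.smul_apply]
        rw [smul_comm] } with hL
  set M : MultilinearMap K (fun _ : Fin (m + 1) => V) V := L.uncurryLeft with hM
  have hdep : ¬ LinearIndependent K v := by
    intro h
    have := h.fintype_card_le_finrank
    simp [hm] at this
  have h0 : (MultilinearMap.alternatization M) v = 0 :=
    AlternatingMap.map_linearDependent _ v hdep
  rw [MultilinearMap.alternatization_apply] at h0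
  convert h0 using 2 with σ
  rw [Units.smul_def]
  rfl
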